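/- arXiv:2009.04942 — 2 statements merged into one kernel-verified Lean document; each statement's English description precedes it below -/
import Mathlib

section
/- Let W ⊆ ℝ^n be a linear subspace and d ∈ ℝ^n. If the system x ∈ W + d, x ≥ 0 is feasible, then there exists x with x ∈ W + d, x ≥ 0, and ‖x − d‖_∞ ≤ κ_W ‖d⁻‖₁. -/
open scoped BigOperators

variable {ι : Type*} [Fintype ι] [DecidableEq ι]

/-- The ℓ₁ norm of a vector. -/
noncomputable def norm1 (x : ι → ℝ) : ℝ := ∑ i, |x i|

/-- The ℓ∞ norm of a vector. -/
noncomputable def normInf (x : ι → ℝ) : ℝ := ⨆ i, |x i|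

/-- The ℓ₂ norm of a vector. -/
noncomputable def norm2 (x : ι → ℝ) : ℝ := Real.sqrt (∑ i, (x i) ^ 2)

/-- The componentwise negative part `max (-x) 0`. -/
noncomputable def vneg (x : ι → ℝ) : ι → ℝ := fun i => max (-(x i)) 0

/-- The componentwise positive part `max x 0`. -/
noncomputable def vpos (x : ι → ℝ) : ι → ℝ := fun i => max (x i) 0

/-- `y` is sign-consistent with `x`. -/
def SignConsistent (y x : ι → ℝ) : Prop :=
  (∀ i, 0 ≤ x i * y i) ∧ ∀ i, x i = 0 → y i = 0

/-- The subspace `ℝ^n_C` of vectors supported on `C`. -/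
def coordSubspace (C : Set ι) : Submodule ℝ (ι → ℝ) where
  carrier := {x | ∀ i ∉ C, x i = 0}
  zero_mem' := by intro i _; rfl
  add_mem' := by intro a b ha hb i hi; simp [ha i hi, hb i hi]
  smul_mem' := by intro c a ha i hi; simp [ha i hi]

/-- `C` is a circuit of the subspace `W`: `W ∩ ℝ^n_C` is one-dimensional and no
strict subset of `C` has this property. -/
def IsCircuit (W : Submodule ℝ (ι → ℝ)) (C : Set ι) : Prop :=
  Module.finrank ℝ ↥(W ⊓ coordSubspace C) = 1 ∧
  ∀ C' : Set ι, C' ⊂ C → Module.finrank ℝ ↥(W ⊓ coordSubspace C') ≠ 1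

/-- The circuit imbalance measure `κ_W`. -/
noncomputable def kappa (W : Submodule ℝ (ι → ℝ)) : ℝ :=
  sSup ({1} ∪ {r | ∃ C : Set ι, IsCircuit W C ∧ ∃ g ∈ W, g ≠ 0 ∧ {i | g i ≠ 0} = C ∧
    r = sSup ((fun i => |g i|) '' C) / sInf ((fun i => |g i|) '' C)})

/-- The matroidal closure of `K` with respect to `W`. -/
def clos (W : Submodule ℝ (ι → ℝ)) (K : Set ι) : Set ι :=
  K ∪ {j | j ∉ K ∧ ∃ C : Set ι, IsCircuit W C ∧ j ∈ C ∧ C ⊆ K ∪ {j}}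

/-- `z` is the minimum-norm lift `L_I^W(p)` of `p` to `W`:
`z ∈ W`, `z` agrees with `p` on `I`, and `z` has minimum ℓ₂-norm among such vectors. -/
def IsMinLift (W : Submodule ℝ (ι → ℝ)) (I : Finset ι) (p z : ι → ℝ) : Prop :=
  z ∈ W ∧ (∀ i ∈ I, z i = p i) ∧
  ∀ z' ∈ W, (∀ i ∈ I, z' i = p i) → norm2 z ≤ norm2 z'

/-- The ℓ₂→ℓ₂ operator norm of the lifting map `L_I^W` on `π_I(W)`. -/
noncomputable def liftOpNorm (W : Submodule ℝ (ι → ℝ)) (I : Finset ι) : ℝ :=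
  sSup {r | ∃ p z, IsMinLift W I p z ∧ r = norm2 z / Real.sqrt (∑ i ∈ I, (p i) ^ 2)}

/-- The condition number `χ̄_W = max{‖L_I^W‖ : ∅ ≠ I}`. -/
noncomputable def chiBar (W : Submodule ℝ (ι → ℝ)) : ℝ :=
  sSup {r | ∃ I : Finset ι, I.Nonempty ∧ r = liftOpNorm W I}

/-- The orthogonal complement of `W` in `ℝ^n`. -/
def orthComp (W : Submodule ℝ (ι → ℝ)) : Submodule ℝ (ι → ℝ) where
  carrier := {y | ∀ x ∈ W, ∑ i, x i * y i = 0}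
  zero_mem' := by intro x hx; simp
  add_mem' := by
    intro a b ha hb x hx
    simpa [mul_add, Finset.sum_add_distrib, ha x hx] using hb x hx
  smul_mem' := by
    intro c a ha x hx
    have h := ha x hx
    have : ∑ i, x i * (c • a) i = c * ∑ i, x i * a i := by
      rw [Finset.mul_sum]
      refine Finset.sum_congr rfl fun i _ => ?_
      simp [Pi.smul_apply, smul_eq_mul]; ring
    simpa [this, h]

/-- `x` is a feasible solution to the primal program of Primal-Dual(W,d,c). -/
def PrimalFeasible (W : Submodule ℝ (ι → ℝ)) (d x : ι → ℝ) : Prop :=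
  x - d ∈ W ∧ ∀ i, 0 ≤ x i

/-- `s` is a feasible solution to the dual program of Primal-Dual(W,d,c). -/
def DualFeasible (W : Submodule ℝ (ι → ℝ)) (c s : ι → ℝ) : Prop :=
  s - c ∈ orthComp W ∧ ∀ i, 0 ≤ s i

/-- `(x,s)` is an optimal solution to Primal-Dual(W,d,c): both feasible and `⟨x,s⟩ = 0`. -/
def IsOptimalPair (W : Submodule ℝ (ι → ℝ)) (d c x s : ι → ℝ) : Prop :=
  PrimalFeasible W d x ∧ DualFeasible W c s ∧ ∑ i, x i * s i = 0

/-- The ℓ₂→ℓ₂ operator norm of a matrix. -/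
noncomputable def l2OpNorm {m n : Type*} [Fintype m] [Fintype n] [DecidableEq n]
    (A : Matrix m n ℝ) : ℝ :=
  ‖LinearMap.toContinuousLinearMap (Matrix.toEuclideanLin A)‖

/-- The max-norm (largest absolute value of an entry) of a matrix. -/
noncomputable def matMaxNorm {m n : Type*} [Fintype m] [Fintype n] (A : Matrix m n ℝ) : ℝ :=
  ⨆ i, ⨆ j, |A i j|


set_option linter.unusedSectionVars false
section Aux
variable {ι : Type*} [Fintype ι] [DecidableEq ι]

lemma mem_coordSubspace' {C : Set ι} {x : ι → ℝ} :
    (∀ i ∉ C, x i = 0) → True := fun _ => trivial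

noncomputable def suppF (v : ι → ℝ) : Finset ι := Finset.univ.filter (fun i => v i ≠ 0)

lemma mem_suppF {v : ι → ℝ} {i : ι} : i ∈ suppF v ↔ v i ≠ 0 := by simp [suppF]

/-- helper: |a - b| = |a| - |b| when b has the sign of a and |b| ≤ |a| -/
lemma abs_sub_eq_abs_sub_abs {a b : ℝ} (h1 : 0 ≤ b * a) (h2 : |b| ≤ |a|) :
    |a - b| = |a| - |b| := by
  rcases le_or_gt 0 a with ha | ha
  · have hb : 0 ≤ b := by
      rcases eq_or_lt_of_le ha with h | h
      · have hb0 : |b| ≤ 0 := by rwa [← h, abs_zero] at h2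
        simp [abs_nonpos_iff.1 hb0]
      · nlinarith
    rw [abs_of_nonneg ha, abs_of_nonneg hb] at *
    rw [abs_of_nonneg (by linarith)]
  · have hb : b ≤ 0 := by nlinarith
    rw [abs_of_neg ha, abs_of_nonpos hb] at *
    rw [abs_of_nonpos (by linarith)]
    ring

lemma pos_chain {a b c : ℝ} (h1 : 0 < a * b) (h2 : 0 < b * c) : 0 < a * c := by
  have hb : b ≠ 0 := by rintro rfl; simp at h1
  have hb2 : 0 < b * b := mul_self_pos.mpr hb
  nlinarith

lemma div_abs_of_mul_pos {a b : ℝ} (h : 0 < a * b) : a / b = |a| / |b| := by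
  rcases lt_trichotomy b 0 with hb | hb | hb
  · have ha : a < 0 := by nlinarith
    rw [abs_of_neg ha, abs_of_neg hb, neg_div_neg_eq]
  · simp [hb] at h
  · have ha : 0 < a := by nlinarith
    rw [abs_of_pos ha, abs_of_pos hb]

end Aux

section Dev
variable {ι : Type*} [Fintype ι] [DecidableEq ι]

lemma mem_coordSubspace {C : Set ι} {x : ι → ℝ} :
    x ∈ coordSubspace C ↔ ∀ i ∉ C, x i = 0 := Iff.rfl

lemma circuit_of_minimal (W : Submodule ℝ (ι → ℝ)) (v : ι → ℝ) (hvW : v ∈ W) (hv : v ≠ 0)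
    (hmin : ∀ u ∈ W, u ≠ 0 → ¬ ({i | u i ≠ 0} ⊂ {i | v i ≠ 0})) :
    IsCircuit W {i | v i ≠ 0} := by
  constructor
  · rw [finrank_eq_one_iff']
    have hvmem : v ∈ W ⊓ coordSubspace {i | v i ≠ 0} :=
      Submodule.mem_inf.2 ⟨hvW, fun i hi => not_not.1 hi⟩
    refine ⟨⟨v, hvmem⟩, by simpa using hv, ?_⟩
    rintro ⟨u, hu⟩
    obtain ⟨huW, huC⟩ := Submodule.mem_inf.1 hu
    by_cases hu0 : u = 0
    · exact ⟨0, by ext; simp [hu0]⟩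
    · obtain ⟨i0, hi0⟩ := Function.ne_iff.1 hv
      refine ⟨u i0 / v i0, ?_⟩
      have hsubW : u - (u i0 / v i0) • v ∈ W := W.sub_mem huW (W.smul_mem _ hvW)
      have hzero : u - (u i0 / v i0) • v = 0 := by
        by_contra hne
        refine hmin _ hsubW hne ⟨fun i hi => ?_, fun hts => ?_⟩
        · simp only [Set.mem_setOf_eq] at hi ⊢
          intro hvi
          exact hi (by simp [huC i (by simpa using hvi), hvi])
        · have : (u - (u i0 / v i0) • v) i0 = 0 := by
            simp [div_mul_cancel₀ _ hi0]
          exact (hts hi0) this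
      ext
      simp only [Submodule.coe_smul, SetLike.mk_smul_mk]
      have := sub_eq_zero.1 hzero
      rw [← this]
  · intro C' hC' h1
    obtain ⟨z, hz0, -⟩ := finrank_eq_one_iff'.1 h1
    obtain ⟨hzW, hzC⟩ := Submodule.mem_inf.1 z.2
    have hz : (z : ι → ℝ) ≠ 0 := fun h => hz0 (by ext i; exact congrFun h i)
    refine hmin z hzW hz (lt_of_le_of_lt (fun i hi => ?_) hC')
    by_contra hiC
    exact hi (hzC i hiC)

/-- conformality: `e` is sign-consistent with `v` and supported within `v`'s support. -/
def Conf (e v : ι → ℝ) : Prop := ∀ i, 0 ≤ e i * v i ∧ (v i = 0 → e i = 0)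

lemma Conf.refl (v : ι → ℝ) : Conf v v := fun i => ⟨mul_self_nonneg _, id⟩

lemma Conf.trans {a b c : ι → ℝ} (hab : Conf a b) (hbc : Conf b c) : Conf a c := by
  intro i
  refine ⟨?_, fun hc => (hab i).2 ((hbc i).2 hc)⟩
  rcases eq_or_ne (a i) 0 with h | ha; · simp [h]
  have hb : b i ≠ 0 := fun h => ha ((hab i).2 h)
  have hc : c i ≠ 0 := fun h => hb ((hbc i).2 h)
  have h1 : 0 < a i * b i := lt_of_le_of_ne (hab i).1 (Ne.symm (mul_ne_zero ha hb))
  have h2 : 0 < b i * c i := lt_of_le_of_ne (hbc i).1 (Ne.symm (mul_ne_zero hb hc))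
  exact (pos_chain h1 h2).le

lemma exists_conformal_circuit (W : Submodule ℝ (ι → ℝ)) :
    ∀ k (v : ι → ℝ), (suppF v).card ≤ k → v ∈ W → v ≠ 0 →
    ∃ e, e ∈ W ∧ e ≠ 0 ∧ Conf e v ∧ IsCircuit W {i | e i ≠ 0} := by
  intro k
  induction k with
  | zero =>
    intro v hcard _ hv
    exfalso
    obtain ⟨i, hi⟩ := Function.ne_iff.1 hv
    have : i ∈ suppF v := mem_suppF.2 hi
    have := Finset.card_pos.2 ⟨i, this⟩
    omega
  | succ k ih =>
    intro v hcard hvW hv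
    by_cases h : ∃ u ∈ W, u ≠ 0 ∧ {i | u i ≠ 0} ⊂ {i | v i ≠ 0}
    · obtain ⟨u, huW, hu0, hss⟩ := h
      have hune : (suppF u).Nonempty := by
        obtain ⟨i, hi⟩ := Function.ne_iff.1 hu0
        exact ⟨i, mem_suppF.2 hi⟩
      obtain ⟨i0, hi0mem, hi0eq⟩ :=
        Finset.exists_mem_eq_inf' hune (fun i => |v i| / |u i|)
      have hui0 : u i0 ≠ 0 := mem_suppF.1 hi0mem
      have hvu : ∀ i, v i = 0 → u i = 0 := by
        intro i hvi
        by_contra hui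
        exact (hss.1 hui) hvi
      have hvi0 : v i0 ≠ 0 := by
        intro h0
        exact hui0 (hvu i0 h0)
      set t := v i0 / u i0 with ht
      have htne : t ≠ 0 := div_ne_zero hvi0 hui0
      have hratio : ∀ i, |t| * |u i| ≤ |v i| := by
        intro i
        rcases eq_or_ne (u i) 0 with h0 | h0
        · simp [h0, abs_nonneg]
        · have h1 : |v i0| / |u i0| ≤ |v i| / |u i| :=
            hi0eq ▸ Finset.inf'_le _ (mem_suppF.2 h0)
          have : |t| = |v i0| / |u i0| := by rw [ht, abs_div]
          rw [this]
          calc |v i0| / |u i0| * |u i| ≤ |v i| / |u i| * |u i| :=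
                mul_le_mul_of_nonneg_right h1 (abs_nonneg _)
            _ = |v i| := div_mul_cancel₀ _ (abs_ne_zero.2 h0)
      set v' := v - t • u with hv'
      have hv'W : v' ∈ W := W.sub_mem hvW (W.smul_mem _ huW)
      have hv'v : Conf v' v := by
        intro i
        constructor
        · have h1 : t * u i * v i ≤ |v i| * |v i| := by
            calc t * u i * v i ≤ |t * u i * v i| := le_abs_self _
              _ = |t| * |u i| * |v i| := by rw [abs_mul, abs_mul]
              _ ≤ |v i| * |v i| := mul_le_mul_of_nonneg_right (hratio i) (abs_nonneg _)
          have h2 : v i * v i = |v i| * |v i| := (abs_mul_abs_self _).symm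
          have : v' i = v i - t * u i := by simp [hv']
          rw [this]
          nlinarith
        · intro hvi
          simp [hv', hvi, hvu i hvi]
      have hv'0 : v' ≠ 0 := by
        intro h0
        have hveq : v = t • u := by
          have := sub_eq_zero.1 h0
          exact this
        have : {i | u i ≠ 0} = {i | v i ≠ 0} := by
          ext i
          simp only [Set.mem_setOf_eq, hveq, Pi.smul_apply, smul_eq_mul]
          constructor
          · exact fun h => mul_ne_zero htne h
          · intro h hc; exact h (by simp [hc])
        exact hss.ne this
      have hsslt : suppF v' ⊂ suppF v := by
        constructor
        · intro i hi
          rw [mem_suppF] at hi ⊢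
          intro hvi
          exact hi ((hv'v i).2 hvi)
        · intro hsub
          have hv'i0 : v' i0 = 0 := by
            simp [hv', ht, div_mul_cancel₀ _ hui0]
          have := mem_suppF.1 (hsub (mem_suppF.2 hvi0))
          exact this hv'i0
      have hcard' : (suppF v').card ≤ k := by
        have := Finset.card_lt_card hsslt
        omega
      obtain ⟨e, heW, he0, hconf, hcirc⟩ := ih v' hcard' hv'W hv'0
      exact ⟨e, heW, he0, hconf.trans hv'v, hcirc⟩
    · push_neg at h
      exact ⟨v, hvW, hv, Conf.refl v,
        circuit_of_minimal W v hvW hv (fun u huW hu0 => h u huW hu0)⟩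

lemma csSup_mul_image {A : Set ℝ} (hA : A.Nonempty) (hAf : A.Finite) {c : ℝ} (hc : 0 ≤ c) :
    sSup ((fun y => c * y) '' A) = c * sSup A := by
  refine IsGreatest.csSup_eq ⟨Set.mem_image_of_mem _ (hA.csSup_mem hAf), ?_⟩
  rintro y ⟨a, ha, rfl⟩
  exact mul_le_mul_of_nonneg_left (le_csSup hAf.bddAbove ha) hc

lemma csInf_mul_image {A : Set ℝ} (hA : A.Nonempty) (hAf : A.Finite) {c : ℝ} (hc : 0 ≤ c) :
    sInf ((fun y => c * y) '' A) = c * sInf A := by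
  refine IsLeast.csInf_eq ⟨Set.mem_image_of_mem _ (hA.csInf_mem hAf), ?_⟩
  rintro y ⟨a, ha, rfl⟩
  exact mul_le_mul_of_nonneg_left (csInf_le hAf.bddBelow ha) hc

/-- the defining set of `kappa`. -/
def kapSet (W : Submodule ℝ (ι → ℝ)) : Set ℝ :=
  {1} ∪ {r | ∃ C : Set ι, IsCircuit W C ∧ ∃ g ∈ W, g ≠ 0 ∧ {i | g i ≠ 0} = C ∧
    r = sSup ((fun i => |g i|) '' C) / sInf ((fun i => |g i|) '' C)}

lemma kappa_eq (W : Submodule ℝ (ι → ℝ)) : kappa W = sSup (kapSet W) := rfl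

lemma kapSet_finite (W : Submodule ℝ (ι → ℝ)) : (kapSet W).Finite := by
  refine Set.Finite.union (Set.finite_singleton 1) ?_
  have hsub : {r | ∃ C : Set ι, IsCircuit W C ∧ ∃ g ∈ W, g ≠ 0 ∧ {i | g i ≠ 0} = C ∧
      r = sSup ((fun i => |g i|) '' C) / sInf ((fun i => |g i|) '' C)} ⊆
      ⋃ C : Set ι, {r | IsCircuit W C ∧ ∃ g ∈ W, g ≠ 0 ∧ {i | g i ≠ 0} = C ∧
      r = sSup ((fun i => |g i|) '' C) / sInf ((fun i => |g i|) '' C)} := by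
    rintro r ⟨C, hC, hg⟩
    exact Set.mem_iUnion.2 ⟨C, hC, hg⟩
  refine Set.Finite.subset (Set.finite_iUnion fun C => ?_) hsub
  refine Set.Subsingleton.finite ?_
  rintro r₁ ⟨hC, g₁, hg₁W, hg₁0, hg₁C, rfl⟩ r₂ ⟨-, g₂, hg₂W, hg₂0, hg₂C, rfl⟩
  -- both g₁ g₂ span the 1-dim space, so proportional
  obtain ⟨z, hz0, hspan⟩ := finrank_eq_one_iff'.1 hC.1
  have hmem : ∀ (g : ι → ℝ), g ∈ W → {i | g i ≠ 0} = C → g ∈ W ⊓ coordSubspace C := by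
    intro g hgW hgC
    refine Submodule.mem_inf.2 ⟨hgW, fun i hi => ?_⟩
    rw [← hgC] at hi
    exact not_not.1 hi
  obtain ⟨a, ha⟩ := hspan ⟨g₁, hmem g₁ hg₁W hg₁C⟩
  obtain ⟨b, hb⟩ := hspan ⟨g₂, hmem g₂ hg₂W hg₂C⟩
  have ha' : a • (z : ι → ℝ) = g₁ := congrArg Subtype.val ha
  have hb' : b • (z : ι → ℝ) = g₂ := congrArg Subtype.val hb
  have hane : a ≠ 0 := by rintro rfl; simp at ha'; exact hg₁0 ha'.symm
  have hbne : b ≠ 0 := by rintro rfl; simp at hb'; exact hg₂0 hb'.symm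
  set c := b / a with hc
  have hcne : c ≠ 0 := div_ne_zero hbne hane
  have hg21 : ∀ i, g₂ i = c * g₁ i := by
    intro i
    rw [← ha', ← hb']
    simp only [Pi.smul_apply, smul_eq_mul, hc]
    field_simp
  have hCne : C.Nonempty := by
    obtain ⟨i, hi⟩ := Function.ne_iff.1 hg₁0
    exact ⟨i, hg₁C ▸ hi⟩
  have hAne : ((fun i => |g₁ i|) '' C).Nonempty := hCne.image _
  have hAf : ((fun i => |g₁ i|) '' C).Finite := (Set.toFinite C).image _
  have himg : (fun i => |g₂ i|) '' C = (fun y => |c| * y) '' ((fun i => |g₁ i|) '' C) := by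
    rw [Set.image_image]
    apply Set.image_congr
    intro i _
    rw [hg21 i, abs_mul]
  rw [himg, csSup_mul_image hAne hAf (abs_nonneg c), csInf_mul_image hAne hAf (abs_nonneg c),
    mul_div_mul_left _ _ (abs_ne_zero.2 hcne)]

lemma one_le_kappa (W : Submodule ℝ (ι → ℝ)) : 1 ≤ kappa W := by
  rw [kappa_eq]
  exact le_csSup (kapSet_finite W).bddAbove (Or.inl rfl)

lemma kappa_nonneg (W : Submodule ℝ (ι → ℝ)) : 0 ≤ kappa W :=
  le_trans zero_le_one (one_le_kappa W)

lemma circuit_ratio_le (W : Submodule ℝ (ι → ℝ)) (e : ι → ℝ) (heW : e ∈ W) (hne : e ≠ 0)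
    (hC : IsCircuit W {i | e i ≠ 0}) :
    ∀ i j, e j ≠ 0 → |e i| ≤ kappa W * |e j| := by
  intro i j hj
  rcases eq_or_ne (e i) 0 with hi | hi
  · rw [hi, abs_zero]
    exact mul_nonneg (kappa_nonneg W) (abs_nonneg _)
  set A := (fun i => |e i|) '' {i | e i ≠ 0} with hA
  have hAne : A.Nonempty := ⟨|e j|, j, hj, rfl⟩
  have hAf : A.Finite := (Set.toFinite _).image _
  have hApos : ∀ a ∈ A, 0 < a := by rintro a ⟨i', hi', rfl⟩; exact abs_pos.2 hi'
  have hInfpos : 0 < sInf A := hApos _ (hAne.csInf_mem hAf)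
  have hrmem : sSup A / sInf A ∈ kapSet W :=
    Or.inr ⟨{i | e i ≠ 0}, hC, e, heW, hne, rfl, rfl⟩
  have hrle : sSup A / sInf A ≤ kappa W := by
    rw [kappa_eq]
    exact le_csSup (kapSet_finite W).bddAbove hrmem
  calc |e i| ≤ sSup A := le_csSup hAf.bddAbove ⟨i, hi, rfl⟩
    _ = sSup A / sInf A * sInf A := (div_mul_cancel₀ _ (ne_of_gt hInfpos)).symm
    _ ≤ kappa W * sInf A := mul_le_mul_of_nonneg_right hrle hInfpos.le
    _ ≤ kappa W * |e j| := mul_le_mul_of_nonneg_left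
        (csInf_le hAf.bddBelow ⟨j, hj, rfl⟩) (kappa_nonneg W)

lemma exists_l1_minimizer (W : Submodule ℝ (ι → ℝ)) (d : ι → ℝ)
    (hfeas : ∃ x : ι → ℝ, x - d ∈ W ∧ ∀ i, 0 ≤ x i) :
    ∃ x : ι → ℝ, (x - d ∈ W ∧ ∀ i, 0 ≤ x i) ∧
      ∀ y : ι → ℝ, y - d ∈ W → (∀ i, 0 ≤ y i) →
        ∑ i, |x i - d i| ≤ ∑ i, |y i - d i| := by
  obtain ⟨x₀, hx₀W, hx₀0⟩ := hfeas
  set f : (ι → ℝ) → ℝ := fun y => ∑ i, |y i - d i| with hf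
  have hfc : Continuous f := by
    apply continuous_finset_sum
    intro i _
    exact ((continuous_apply i).sub continuous_const).abs
  have hfnonneg : ∀ y, 0 ≤ f y := fun y => Finset.sum_nonneg fun i _ => abs_nonneg _
  set K : Set (ι → ℝ) := {y | (y - d ∈ W ∧ ∀ i, 0 ≤ y i) ∧ f y ≤ f x₀} with hK
  have hKclosed : IsClosed K := by
    have h1 : IsClosed {y : ι → ℝ | y - d ∈ W} :=
      IsClosed.preimage (continuous_id.sub continuous_const)
        (Submodule.closed_of_finiteDimensional W)
    have h2 : IsClosed {y : ι → ℝ | ∀ i, 0 ≤ y i} := by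
      have : {y : ι → ℝ | ∀ i, 0 ≤ y i} = ⋂ i, {y : ι → ℝ | 0 ≤ y i} := by
        ext y; simp
      rw [this]
      exact isClosed_iInter fun i => isClosed_le continuous_const (continuous_apply i)
    have h3 : IsClosed {y : ι → ℝ | f y ≤ f x₀} := isClosed_le hfc continuous_const
    have : K = ({y : ι → ℝ | y - d ∈ W} ∩ {y | ∀ i, 0 ≤ y i}) ∩ {y | f y ≤ f x₀} := by
      ext y; simp [hK, and_assoc]
    rw [this]
    exact ((h1.inter h2).inter h3)
  have hKbdd : Bornology.IsBounded K := by
    refine (Metric.isBounded_closedBall (x := (0 : ι → ℝ)) (r := ‖d‖ + f x₀)).subset ?_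
    intro y hy
    rw [Metric.mem_closedBall, dist_zero_right]
    have h1 : ‖y - d‖ ≤ f x₀ := by
      rw [pi_norm_le_iff_of_nonneg (le_trans (hfnonneg x₀) le_rfl)]
      intro i
      have : |y i - d i| ≤ f y :=
        Finset.single_le_sum (f := fun j => |y j - d j|)
          (fun j _ => abs_nonneg _) (Finset.mem_univ i)
      calc ‖(y - d) i‖ = |y i - d i| := by simp [Real.norm_eq_abs]
        _ ≤ f y := this
        _ ≤ f x₀ := hy.2
    calc ‖y‖ = ‖(y - d) + d‖ := by ring_nf
      _ ≤ ‖y - d‖ + ‖d‖ := norm_add_le _ _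
      _ ≤ f x₀ + ‖d‖ := by linarith
      _ = ‖d‖ + f x₀ := by ring
  have hKcompact : IsCompact K := Metric.isCompact_of_isClosed_isBounded hKclosed hKbdd
  have hKne : K.Nonempty := ⟨x₀, ⟨hx₀W, hx₀0⟩, le_rfl⟩
  obtain ⟨x, hxK, hxmin⟩ := hKcompact.exists_isMinOn hKne hfc.continuousOn
  refine ⟨x, hxK.1, ?_⟩
  intro y hyW hy0
  by_cases hy : f y ≤ f x₀
  · exact hxmin ⟨⟨hyW, hy0⟩, hy⟩
  · have h1 : f x ≤ f x₀ := hxK.2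
    linarith [not_le.1 hy]

lemma key_bound (W : Submodule ℝ (ι → ℝ)) (x d : ι → ℝ) (hxW : x - d ∈ W) (hx0 : ∀ i, 0 ≤ x i)
    (hmin : ∀ y : ι → ℝ, y - d ∈ W → (∀ i, 0 ≤ y i) →
      ∑ i, |x i - d i| ≤ ∑ i, |y i - d i|) :
    ∀ k (v : ι → ℝ), (suppF v).card ≤ k → v ∈ W →
    (∀ i, 0 ≤ v i * (x i - d i) ∧ |v i| ≤ |x i - d i|) →
    ∀ i, |v i| ≤ kappa W * ∑ j ∈ Finset.univ.filter (fun j => x j = 0 ∧ 0 < x j - d j), |v j| := by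
  intro k
  induction k with
  | zero =>
    intro v hcard _ _ i
    have hv : ∀ j, v j = 0 := by
      intro j; by_contra hj
      have := Finset.card_pos.2 ⟨j, mem_suppF.2 hj⟩
      omega
    simp [hv]
  | succ k ih =>
    intro v hcard hvW hsub i
    rcases eq_or_ne v 0 with rfl | hv0
    · simp
    obtain ⟨e, heW, hene, hconf, hcirc⟩ :=
      exists_conformal_circuit W (suppF v).card v le_rfl hvW hv0
    have f1 : ∀ i, e i ≠ 0 → v i ≠ 0 := fun i hi hv => hi ((hconf i).2 hv)
    have f2 : ∀ i, e i ≠ 0 → 0 < e i * v i := fun i hi =>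
      lt_of_le_of_ne (hconf i).1 (Ne.symm (mul_ne_zero hi (f1 i hi)))
    have f3 : ∀ i, v i ≠ 0 → x i - d i ≠ 0 := by
      intro i hvi hwi
      have h2 := (hsub i).2
      rw [hwi, abs_zero] at h2
      exact hvi (abs_nonpos_iff.1 h2)
    have f4 : ∀ i, v i ≠ 0 → 0 < v i * (x i - d i) := fun i hvi =>
      lt_of_le_of_ne (hsub i).1 (Ne.symm (mul_ne_zero hvi (f3 i hvi)))
    have f5 : ∀ i, e i ≠ 0 → 0 < e i * (x i - d i) := fun i hi =>
      pos_chain (f2 i hi) (f4 i (f1 i hi))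
    have hsne : (suppF e).Nonempty := by
      obtain ⟨j, hj⟩ := Function.ne_iff.1 hene
      exact ⟨j, mem_suppF.2 hj⟩
    -- every conformal circuit must touch a tight coordinate with positive residual
    have hwit : ∃ j, (x j = 0 ∧ 0 < x j - d j) ∧ e j ≠ 0 := by
      by_contra hcon
      push_neg at hcon
      set r : ι → ℝ := fun i =>
        if 0 < e i then min (x i / e i) ((x i - d i) / e i) else (x i - d i) / e i with hr
      set ε := (suppF e).inf' hsne r with hε
      have hrpos : ∀ i ∈ suppF e, 0 < r i := by
        intro i hi
        have hei : e i ≠ 0 := mem_suppF.1 hi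
        have hw5 := f5 i hei
        by_cases hpos : 0 < e i
        · have hwpos : 0 < x i - d i := by nlinarith
          have hxpos : 0 < x i := by
            rcases (hx0 i).lt_or_eq with h | h
            · exact h
            · exact absurd (hcon i ⟨h.symm, hwpos⟩) hei
          simp only [hr, if_pos hpos]
          exact lt_min (div_pos hxpos hpos) (div_pos hwpos hpos)
        · have hneg : e i < 0 := lt_of_le_of_ne (not_lt.1 hpos) hei
          have hwneg : x i - d i < 0 := by nlinarith
          simp only [hr, if_neg hpos]
          exact div_pos_of_neg_of_neg hwneg hneg
      have hεpos : 0 < ε := (Finset.lt_inf'_iff hsne).2 hrpos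
      have hratio : ∀ i, ε * |e i| ≤ |x i - d i| := by
        intro i
        rcases eq_or_ne (e i) 0 with h0 | h0
        · simp [h0, abs_nonneg]
        · have hle : ε ≤ r i := Finset.inf'_le _ (mem_suppF.2 h0)
          have hle2 : r i ≤ (x i - d i) / e i := by
            by_cases hpos : 0 < e i
            · simp only [hr, if_pos hpos]; exact min_le_right _ _
            · simp only [hr, if_neg hpos]
              exact le_rfl
          have habs : (x i - d i) / e i = |x i - d i| / |e i| :=
            div_abs_of_mul_pos (by have := f5 i h0; nlinarith)
          have h3 : ε ≤ |x i - d i| / |e i| := by rw [← habs]; exact hle.trans hle2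
          calc ε * |e i| ≤ |x i - d i| / |e i| * |e i| :=
                mul_le_mul_of_nonneg_right h3 (abs_nonneg _)
            _ = |x i - d i| := div_mul_cancel₀ _ (abs_ne_zero.2 h0)
      have hxnn : ∀ i, 0 ≤ x i - ε * e i := by
        intro i
        rcases lt_trichotomy (e i) 0 with hneg | h0 | hpos
        · nlinarith [hx0 i, hεpos]
        · simp [h0, hx0 i]
        · have hle : ε ≤ r i := Finset.inf'_le _ (mem_suppF.2 (ne_of_gt hpos))
          have h2 : r i ≤ x i / e i := by
            simp only [hr, if_pos hpos]; exact min_le_left _ _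
          have h3 := (le_div_iff₀ hpos).1 (hle.trans h2)
          linarith
      have habseq : ∀ i, |x i - d i - ε * e i| = |x i - d i| - ε * |e i| := by
        intro i
        have h1 : 0 ≤ (ε * e i) * (x i - d i) := by
          rcases eq_or_ne (e i) 0 with h0 | h0
          · simp [h0]
          · have := f5 i h0; nlinarith
        have h2 : |ε * e i| ≤ |x i - d i| := by
          rw [abs_mul, abs_of_pos hεpos]; exact hratio i
        have h3 := abs_sub_eq_abs_sub_abs h1 h2
        rwa [abs_mul, abs_of_pos hεpos] at h3
      set y : ι → ℝ := x - ε • e with hy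
      have hyd : ∀ i, y i - d i = x i - d i - ε * e i := by
        intro i
        simp only [hy, Pi.sub_apply, Pi.smul_apply, smul_eq_mul]
        ring
      have hyW : y - d ∈ W := by
        have h : y - d = (x - d) - ε • e := by
          ext i
          simp only [hy, Pi.sub_apply, Pi.smul_apply, smul_eq_mul]
          ring
        rw [h]
        exact W.sub_mem hxW (W.smul_mem _ heW)
      have hy0 : ∀ i, 0 ≤ y i := by
        intro i
        simpa only [hy, Pi.sub_apply, Pi.smul_apply, smul_eq_mul] using hxnn i
      have hstrict : ∑ i, |y i - d i| < ∑ i, |x i - d i| := by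
        apply Finset.sum_lt_sum
        · intro i _
          rw [hyd i, habseq i]
          have : 0 ≤ ε * |e i| := mul_nonneg hεpos.le (abs_nonneg _)
          linarith
        · obtain ⟨i₁, hi₁⟩ := hsne
          refine ⟨i₁, Finset.mem_univ _, ?_⟩
          rw [hyd i₁, habseq i₁]
          have : 0 < ε * |e i₁| := mul_pos hεpos (abs_pos.2 (mem_suppF.1 hi₁))
          linarith
      exact absurd (hmin y hyW hy0) (not_le.2 hstrict)
    obtain ⟨istar, hZstar, hestar⟩ := hwit
    -- the λ-step: peel off the circuit
    set lam := (suppF e).inf' hsne (fun i => v i / e i) with hlam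
    have hqeq : ∀ i ∈ suppF e, v i / e i = |v i| / |e i| := by
      intro i hi
      exact div_abs_of_mul_pos (by have := f2 i (mem_suppF.1 hi); nlinarith)
    have hlampos : 0 < lam := by
      rw [hlam]
      apply (Finset.lt_inf'_iff hsne).2
      intro i hi
      rw [hqeq i hi]
      exact div_pos (abs_pos.2 (f1 i (mem_suppF.1 hi))) (abs_pos.2 (mem_suppF.1 hi))
    have hlamle : ∀ i, lam * |e i| ≤ |v i| := by
      intro i
      rcases eq_or_ne (e i) 0 with h0 | h0
      · simp [h0, abs_nonneg]
      · have h1 : lam ≤ |v i| / |e i| := by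
          rw [← hqeq i (mem_suppF.2 h0)]
          exact Finset.inf'_le _ (mem_suppF.2 h0)
        calc lam * |e i| ≤ |v i| / |e i| * |e i| :=
              mul_le_mul_of_nonneg_right h1 (abs_nonneg _)
          _ = |v i| := div_mul_cancel₀ _ (abs_ne_zero.2 h0)
    set v' : ι → ℝ := v - lam • e with hv'
    have hv'W : v' ∈ W := W.sub_mem hvW (W.smul_mem _ heW)
    have hv'app : ∀ i, v' i = v i - lam * e i := by
      intro i
      simp only [hv', Pi.sub_apply, Pi.smul_apply, smul_eq_mul]
    have heq : ∀ i, |v' i| = |v i| - lam * |e i| := by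
      intro i
      have h1 : 0 ≤ (lam * e i) * v i := by
        rcases eq_or_ne (e i) 0 with h0 | h0
        · simp [h0]
        · have := f2 i h0; nlinarith
      have h2 : |lam * e i| ≤ |v i| := by
        rw [abs_mul, abs_of_pos hlampos]; exact hlamle i
      rw [hv'app i]
      have h3 := abs_sub_eq_abs_sub_abs h1 h2
      rwa [abs_mul, abs_of_pos hlampos] at h3
    have hsub' : ∀ i, 0 ≤ v' i * (x i - d i) ∧ |v' i| ≤ |x i - d i| := by
      intro i
      have h2 : |lam * e i| ≤ |v i| := by
        rw [abs_mul, abs_of_pos hlampos]; exact hlamle i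
      have hle : |v' i| ≤ |v i| := by
        rw [heq i]
        have := mul_nonneg hlampos.le (abs_nonneg (e i))
        linarith
      refine ⟨?_, hle.trans (hsub i).2⟩
      rcases eq_or_ne (v' i) 0 with h0 | h0
      · simp [h0]
      · have hvine : v i ≠ 0 := by
          intro hvi
          exact h0 (by rw [hv'app i, hvi, (hconf i).2 hvi]; ring)
        have hvv0 : 0 ≤ v' i * v i := by
          rw [hv'app i]
          have ha : (lam * e i) * v i ≤ |lam * e i| * |v i| := by
            calc (lam * e i) * v i ≤ |(lam * e i) * v i| := le_abs_self _
              _ = |lam * e i| * |v i| := abs_mul _ _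
          have hb : |lam * e i| * |v i| ≤ |v i| * |v i| :=
            mul_le_mul_of_nonneg_right h2 (abs_nonneg _)
          have hc : |v i| * |v i| = v i * v i := abs_mul_abs_self _
          nlinarith
        have hvv : 0 < v' i * v i :=
          lt_of_le_of_ne hvv0 (Ne.symm (mul_ne_zero h0 hvine))
        exact (pos_chain hvv (f4 i hvine)).le
    obtain ⟨i₁, hi₁mem, hi₁eq⟩ := Finset.exists_mem_eq_inf' hsne (fun i => v i / e i)
    have hv'i₁ : v' i₁ = 0 := by
      have h : lam = v i₁ / e i₁ := by rw [hlam, hi₁eq]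
      rw [hv'app i₁, h, div_mul_cancel₀ _ (mem_suppF.1 hi₁mem)]
      ring
    have hsslt : suppF v' ⊂ suppF v := by
      constructor
      · intro j hj
        rw [mem_suppF] at hj ⊢
        intro hvj
        exact hj (by rw [hv'app j, hvj, (hconf j).2 hvj]; ring)
      · intro hsup
        have : v i₁ ≠ 0 := f1 i₁ (mem_suppF.1 hi₁mem)
        exact (mem_suppF.1 (hsup (mem_suppF.2 this))) hv'i₁
    have hcard' : (suppF v').card ≤ k := by
      have := Finset.card_lt_card hsslt
      omega
    have ihv' := ih v' hcard' hv'W hsub'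
    set Z := Finset.univ.filter (fun j => x j = 0 ∧ 0 < x j - d j) with hZ
    have histarZ : istar ∈ Z := Finset.mem_filter.2 ⟨Finset.mem_univ _, hZstar⟩
    have hei : |e i| ≤ kappa W * |e istar| :=
      circuit_ratio_le W e heW hene hcirc i istar hestar
    have hsum1 : lam * |e istar| ≤ ∑ j ∈ Z, lam * |e j| :=
      Finset.single_le_sum (f := fun j => lam * |e j|)
        (fun j _ => mul_nonneg hlampos.le (abs_nonneg _)) histarZ
    have hsum2 : ∑ j ∈ Z, (|v' j| + lam * |e j|) = ∑ j ∈ Z, |v j| :=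
      Finset.sum_congr rfl (fun j _ => by rw [heq j]; ring)
    have hκ := kappa_nonneg W
    calc |v i| = |v' i| + lam * |e i| := by rw [heq i]; ring
      _ ≤ kappa W * ∑ j ∈ Z, |v' j| + lam * (kappa W * |e istar|) := by
          have h1 := ihv' i
          have h2 : lam * |e i| ≤ lam * (kappa W * |e istar|) :=
            mul_le_mul_of_nonneg_left hei hlampos.le
          linarith
      _ = kappa W * (∑ j ∈ Z, |v' j| + lam * |e istar|) := by ring
      _ ≤ kappa W * (∑ j ∈ Z, |v' j| + ∑ j ∈ Z, lam * |e j|) := by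
          apply mul_le_mul_of_nonneg_left _ hκ
          linarith
      _ = kappa W * ∑ j ∈ Z, (|v' j| + lam * |e j|) := by
          rw [Finset.sum_add_distrib]
      _ = kappa W * ∑ j ∈ Z, |v j| := by rw [hsum2]

end Dev
/-- if `x ∈ W + d, x ≥ 0` is feasible, then it has a solution with
`‖x − d‖_∞ ≤ κ_W ‖d⁻‖₁`. -/
theorem feasibility_proximity {n : ℕ} (W : Submodule ℝ (Fin n → ℝ)) (d : Fin n → ℝ)
    (hfeas : ∃ x : Fin n → ℝ, x - d ∈ W ∧ ∀ i, 0 ≤ x i) :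
    ∃ x : Fin n → ℝ, x - d ∈ W ∧ (∀ i, 0 ≤ x i) ∧
      normInf (x - d) ≤ kappa W * norm1 (vneg d) := by
  obtain ⟨x, ⟨hxW, hx0⟩, hmin⟩ := exists_l1_minimizer W d hfeas
  refine ⟨x, hxW, hx0, ?_⟩
  have hsub : ∀ i, 0 ≤ (x - d) i * (x i - d i) ∧ |(x - d) i| ≤ |x i - d i| := by
    intro i
    simp only [Pi.sub_apply]
    exact ⟨mul_self_nonneg _, le_rfl⟩
  have hb := key_bound W x d hxW hx0 hmin (suppF (x - d)).card (x - d) le_rfl hxW hsub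
  set Z := Finset.univ.filter (fun j => x j = 0 ∧ 0 < x j - d j) with hZ
  have hZsum : ∑ j ∈ Z, |(x - d) j| ≤ norm1 (vneg d) := by
    have h1 : ∀ j ∈ Z, |(x - d) j| = |vneg d j| := by
      intro j hj
      obtain ⟨-, hxj, hwj⟩ := Finset.mem_filter.1 hj
      rw [hxj, zero_sub] at hwj
      simp only [Pi.sub_apply, vneg]
      rw [hxj, zero_sub, max_eq_left hwj.le]
    rw [Finset.sum_congr rfl h1]
    unfold norm1
    exact Finset.sum_le_sum_of_subset_of_nonneg (Finset.subset_univ Z)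
      (fun j _ _ => abs_nonneg _)
  have hfinal : ∀ i, |(x - d) i| ≤ kappa W * norm1 (vneg d) := by
    intro i
    calc |(x - d) i| ≤ kappa W * ∑ j ∈ Z, |(x - d) j| := by
          simpa only [Pi.sub_apply] using hb i
      _ ≤ kappa W * norm1 (vneg d) :=
          mul_le_mul_of_nonneg_left hZsum (kappa_nonneg W)
  unfold normInf
  rcases isEmpty_or_nonempty (Fin n) with h | h
  · rw [Real.iSup_of_isEmpty]
    exact mul_nonneg (kappa_nonneg W)
      (Finset.sum_nonneg fun j _ => abs_nonneg _)
  · exact ciSup_le hfinal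
end

section
/- Let A ∈ ℝ^{m×n} with rank(A) = m, W = ker(A), y ∈ W ∖ {0}, and J ⊆ {1,…,n} with y_J ≠ 0. Then there exist t ≤ n, coefficients α₁,…,α_t ≥ 0 with α₁ + ⋯ + α_t = 1, and vectors y^{(1)},…,y^{(t)} ∈ W, each having inclusion-wise minimal support subject to the constraint y^{(j)}_J = y_J, such that the vector z := y − Σ_{j=1}^t α_j y^{(j)} belongs to W, is sign-consistent with y, and satisfies z_J = 0 (z = 0 is possible). -/
open scoped BigOperators

variable {ι : Type*} [Fintype ι] [DecidableEq ι]

/-!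
Pick `Y₁` of inclusion-wise minimal support among the vectors of `W` that agree with `y` on `J`
and are supported inside `supp y`, and move from `y` towards `Y₁` as far as sign-consistency
allows: `z = y - α Y₁` with `α = min {y_i / Y₁_i : y_i Y₁_i > 0} ∈ (0, 1]`. Then `z` is
sign-consistent with `y`, `z_J = (1 - α) y_J`, and some coordinate of `supp y` vanishes in `z`.
If `α = 1` we are done; otherwise `z / (1 - α)` again agrees with `y` on `J` and has smaller
support, so induction on `|supp y|` decomposes it, and the decompositions combine with weights
`α` and `(1 - α) β_j`.
-/

open Function

section ConvexDecomposition

variable {κ : Type*}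

namespace SignConsistent

theorem trans {a b c : κ → ℝ} (hcb : SignConsistent c b) (hba : SignConsistent b a) :
    SignConsistent c a := by
  refine ⟨fun i => ?_, fun i hai => hcb.2 i (hba.2 i hai)⟩
  rcases eq_or_ne (b i) 0 with hb | hb
  · simp [hcb.2 i hb]
  · have hb2 : 0 < b i * b i := mul_self_pos.2 hb
    nlinarith [mul_nonneg (hba.1 i) (hcb.1 i)]

theorem smul {u v : κ → ℝ} (h : SignConsistent u v) {c : ℝ} (hc : 0 ≤ c) :
    SignConsistent (c • u) v := by
  refine ⟨fun i => ?_, fun i hv => by simp [h.2 i hv]⟩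
  simpa only [Pi.smul_apply, smul_eq_mul, mul_left_comm] using mul_nonneg hc (h.1 i)

theorem support_subset {u v : κ → ℝ} (h : SignConsistent u v) : support u ⊆ support v :=
  fun i hu => mem_support.2 fun hv => mem_support.1 hu (h.2 i hv)

end SignConsistent

theorem signConsistent_sub_smul {y Y : κ → ℝ} {α : ℝ} (hα : 0 ≤ α)
    (hsupp : ∀ i, y i = 0 → Y i = 0) (hle : ∀ i, 0 < y i * Y i → α ≤ y i / Y i) :
    SignConsistent (y - α • Y) y := by
  refine ⟨fun i => ?_, fun i hi => by simp [hi, hsupp i hi]⟩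
  have key : α * (y i * Y i) ≤ y i ^ 2 := by
    rcases lt_or_ge 0 (y i * Y i) with hpos | hnonpos
    · have hY : Y i ≠ 0 := right_ne_zero_of_mul hpos.ne'
      calc α * (y i * Y i) ≤ y i / Y i * (y i * Y i) := by gcongr; exact hle i hpos
        _ = y i ^ 2 := by field_simp
    · nlinarith
  simp only [Pi.sub_apply, Pi.smul_apply, smul_eq_mul]
  nlinarith

theorem exists_signConsistent_sub_smul [Finite κ] {y Y : κ → ℝ}
    (hsupp : ∀ i, y i = 0 → Y i = 0) {i₀ : κ} (hi₀ : y i₀ ≠ 0) (hY : Y i₀ = y i₀) :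
    ∃ α : ℝ, 0 < α ∧ α ≤ 1 ∧ SignConsistent (y - α • Y) y ∧
      ∃ i, y i ≠ 0 ∧ (y - α • Y) i = 0 := by
  classical
  have := Fintype.ofFinite κ
  set T := Finset.univ.filter fun i => 0 < y i * Y i
  have hi₀T : i₀ ∈ T := by simpa [T, hY] using mul_self_pos.2 hi₀
  set α := T.inf' ⟨i₀, hi₀T⟩ fun i => y i / Y i
  have hle : ∀ i, 0 < y i * Y i → α ≤ y i / Y i := fun i hi =>
    Finset.inf'_le _ (by simpa [T] using hi)
  obtain ⟨i, hiT, hαi⟩ : ∃ i ∈ T, α = y i / Y i := Finset.exists_mem_eq_inf' _ _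
  have hi : 0 < y i * Y i := by simpa [T] using hiT
  have hα0 : 0 < α := by rw [hαi]; exact div_pos_iff.2 (mul_pos_iff.1 hi)
  refine ⟨α, hα0, ?_, signConsistent_sub_smul hα0.le hsupp hle, i, left_ne_zero_of_mul hi.ne', ?_⟩
  · simpa [hY, hi₀] using hle i₀ (by simpa [T] using hi₀T)
  · have hY : Y i ≠ 0 := right_ne_zero_of_mul hi.ne'
    rw [Pi.sub_apply, Pi.smul_apply, smul_eq_mul, hαi, div_mul_cancel₀ _ hY, sub_self]

def IsMinimalSupportLift (W : Submodule ℝ (κ → ℝ)) (J : Finset κ) (y Y : κ → ℝ) : Prop :=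
  Y ∈ W ∧ (∀ i ∈ J, Y i = y i) ∧
    ∀ y'' ∈ W, (∀ i ∈ J, y'' i = y i) → ¬ ({i | y'' i ≠ 0} ⊂ {i | Y i ≠ 0})

theorem IsMinimalSupportLift.of_eqOn {W : Submodule ℝ (κ → ℝ)} {J : Finset κ} {y y' Y : κ → ℝ}
    (h : IsMinimalSupportLift W J y' Y) (hy' : ∀ i ∈ J, y' i = y i) :
    IsMinimalSupportLift W J y Y :=
  ⟨h.1, fun i hi => (h.2.1 i hi).trans (hy' i hi),
    fun y'' hW hJ => h.2.2 y'' hW fun i hi => (hJ i hi).trans (hy' i hi).symm⟩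

/-- Minimality among the vectors supported inside `supp y` is already minimality among all of
them, since a vector with smaller support is again supported inside `supp y`. -/
theorem exists_isMinimalSupportLift [Finite κ] (W : Submodule ℝ (κ → ℝ)) (J : Finset κ)
    {y : κ → ℝ} (hy : y ∈ W) :
    ∃ Y, IsMinimalSupportLift W J y Y ∧ ∀ i, y i = 0 → Y i = 0 := by
  set P : (κ → ℝ) → Prop := fun w => w ∈ W ∧ (∀ i ∈ J, w i = y i) ∧ support w ⊆ support y
  obtain ⟨Y, ⟨hYW, hYJ, hYy⟩, hmin⟩ :=
    exists_minimalFor_of_wellFoundedLT P support ⟨y, hy, fun _ _ => rfl, subset_rfl⟩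
  refine ⟨Y, ⟨hYW, hYJ, fun y'' hW hJ hlt => ?_⟩, fun i hi => by_contra fun h => hYy h hi⟩
  exact MinimalFor.not_lt ⟨⟨hYW, hYJ, hYy⟩, hmin⟩ ⟨hW, hJ, hlt.1.trans hYy⟩ hlt

theorem exists_minimalSupport_step [Finite κ] (W : Submodule ℝ (κ → ℝ)) (J : Finset κ)
    {y : κ → ℝ} (hy : y ∈ W) {i₀ : κ} (hi₀J : i₀ ∈ J) (hi₀ : y i₀ ≠ 0) :
    ∃ (α : ℝ) (Y₁ : κ → ℝ), 0 < α ∧ α ≤ 1 ∧ IsMinimalSupportLift W J y Y₁ ∧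
      SignConsistent (y - α • Y₁) y ∧ support (y - α • Y₁) ⊂ support y := by
  obtain ⟨Y₁, hY₁, hY₁y⟩ := exists_isMinimalSupportLift W J hy
  obtain ⟨α, hα0, hα1, hsc, i, hyi, hzi⟩ :=
    exists_signConsistent_sub_smul hY₁y hi₀ (hY₁.2.1 i₀ hi₀J)
  exact ⟨α, Y₁, hα0, hα1, hY₁, hsc,
    (Set.ssubset_iff_of_subset hsc.support_subset).2 ⟨i, hyi, notMem_support.2 hzi⟩⟩

theorem sub_sum_finCons_smul {K M : Type*} [Field K] [AddCommGroup M] [Module K M] {t : ℕ}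
    (y v : M) {α : K} (hα : α ≠ 1) (β : Fin t → K) (w : Fin t → M) :
    y - ∑ j, (Fin.cons α fun j => (1 - α) * β j : Fin (t + 1) → K) j •
        (Fin.cons v w : Fin (t + 1) → M) j =
      (1 - α) • ((1 - α)⁻¹ • (y - α • v) - ∑ j, β j • w j) := by
  rw [Fin.sum_univ_succ, smul_sub, smul_inv_smul₀ (sub_ne_zero.2 hα.symm)]
  simp only [Fin.cons_zero, Fin.cons_succ, mul_smul, ← Finset.smul_sum]
  abel

theorem exists_convex_minimalSupport_reduction [Finite κ] (W : Submodule ℝ (κ → ℝ))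
    (J : Finset κ) {y : κ → ℝ} (hy : y ∈ W) (hyJ : ∃ i ∈ J, y i ≠ 0) :
    ∃ (t : ℕ) (α : Fin t → ℝ) (Y : Fin t → κ → ℝ),
      t ≤ (support y).ncard ∧ (∀ j, 0 ≤ α j) ∧ ∑ j, α j = 1 ∧
      (∀ j, IsMinimalSupportLift W J y (Y j)) ∧
      SignConsistent (y - ∑ j, α j • Y j) y ∧ ∀ i ∈ J, (y - ∑ j, α j • Y j) i = 0 := by
  induction hk : (support y).ncard using Nat.strong_induction_on generalizing y with
  | _ k ih =>
  obtain ⟨i₀, hi₀J, hi₀⟩ := hyJ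
  obtain ⟨α, Y₁, hα0, hα1, hY₁, hsc, hsupp⟩ := exists_minimalSupport_step W J hy hi₀J hi₀
  have hzJ : ∀ i ∈ J, (y - α • Y₁) i = (1 - α) * y i := fun i hi => by
    simp only [Pi.sub_apply, Pi.smul_apply, smul_eq_mul, hY₁.2.1 i hi]
    ring
  rcases hα1.eq_or_lt with rfl | hα1
  · have hk0 : 1 ≤ k := hk ▸ (Set.ncard_pos (Set.toFinite _)).2 ⟨i₀, hi₀⟩
    refine ⟨1, fun _ => 1, fun _ => Y₁, hk0, fun _ => zero_le_one, by simp, fun _ => hY₁, ?_, ?_⟩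
    · simpa using hsc
    · intro i hi
      simpa using hzJ i hi
  have hα1' : 0 < 1 - α := sub_pos.2 hα1
  set y' := (1 - α)⁻¹ • (y - α • Y₁)
  have hy'J : ∀ i ∈ J, y' i = y i := fun i hi => by
    simp only [y', Pi.smul_apply, smul_eq_mul, hzJ i hi, inv_mul_cancel_left₀ hα1'.ne']
  have hy'W : y' ∈ W := W.smul_mem _ (W.sub_mem hy (W.smul_mem _ hY₁.1))
  have hy'y : SignConsistent y' y := hsc.smul (inv_nonneg.2 hα1'.le)
  have hk' : (support y').ncard < k := by
    rw [← hk, support_const_smul_of_ne_zero _ _ (inv_ne_zero hα1'.ne')]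
    exact Set.ncard_lt_ncard hsupp
  obtain ⟨t, β, Y, ht, hβ0, hβ1, hY, hsc', hJ'⟩ :=
    ih _ hk' hy'W ⟨i₀, hi₀J, (hy'J i₀ hi₀J).trans_ne hi₀⟩ rfl
  have hres := sub_sum_finCons_smul y Y₁ hα1.ne β Y
  refine ⟨t + 1, Fin.cons α fun j => (1 - α) * β j, Fin.cons Y₁ Y, by omega,
    Fin.cases hα0.le fun j => mul_nonneg hα1'.le (hβ0 j), ?_,
    Fin.cases hY₁ fun j => (hY j).of_eqOn hy'J, ?_, ?_⟩
  · simp [Fin.sum_univ_succ, ← Finset.mul_sum, hβ1]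
  · rw [hres]
    exact (hsc'.smul hα1'.le).trans hy'y
  · intro i hi
    rw [hres, Pi.smul_apply, hJ' i hi, smul_zero]

end ConvexDecomposition

theorem convex_decomposition_minimal_support_general {m n : ℕ} (A : Matrix (Fin m) (Fin n) ℝ)
    (y : Fin n → ℝ) (hy : y ∈ LinearMap.ker A.mulVecLin)
    (J : Finset (Fin n)) (hyJ : ∃ i ∈ J, y i ≠ 0) :
    ∃ (t : ℕ) (α : Fin t → ℝ) (Y : Fin t → (Fin n → ℝ)),
      t ≤ n ∧ (∀ j, 0 ≤ α j) ∧ (∑ j, α j) = 1 ∧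
      (∀ j, Y j ∈ LinearMap.ker A.mulVecLin ∧ (∀ i ∈ J, Y j i = y i) ∧
        ∀ y'' ∈ LinearMap.ker A.mulVecLin, (∀ i ∈ J, y'' i = y i) →
          ¬ ({i | y'' i ≠ 0} ⊂ {i | Y j i ≠ 0})) ∧
      (y - ∑ j, α j • Y j) ∈ LinearMap.ker A.mulVecLin ∧
      SignConsistent (y - ∑ j, α j • Y j) y ∧
      (∀ i ∈ J, (y - ∑ j, α j • Y j) i = 0) := by
  obtain ⟨t, α, Y, ht, hα0, hα1, hY, hsc, hJ⟩ :=
    exists_convex_minimalSupport_reduction _ J hy hyJ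
  refine ⟨t, α, Y, ht.trans ?_, hα0, hα1, hY, ?_, hsc, hJ⟩
  · simpa using Set.ncard_le_card (support y)
  · exact sub_mem hy (sum_mem fun j _ => Submodule.smul_mem _ _ (hY j).1)

/-- a vector `y ∈ ker A` can be reduced to a vector vanishing on `J`
by subtracting a convex combination of vectors of `ker A` with minimal support that
agree with `y` on `J`. -/
theorem convex_decomposition_minimal_support {m n : ℕ} (A : Matrix (Fin m) (Fin n) ℝ)
    (hrank : A.rank = m) (y : Fin n → ℝ)
    (hy : y ∈ LinearMap.ker A.mulVecLin) (hy0 : y ≠ 0)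
    (J : Finset (Fin n)) (hyJ : ∃ i ∈ J, y i ≠ 0) :
    ∃ (t : ℕ) (α : Fin t → ℝ) (Y : Fin t → (Fin n → ℝ)),
      t ≤ n ∧ (∀ j, 0 ≤ α j) ∧ (∑ j, α j) = 1 ∧
      (∀ j, Y j ∈ LinearMap.ker A.mulVecLin ∧ (∀ i ∈ J, Y j i = y i) ∧
        ∀ y'' ∈ LinearMap.ker A.mulVecLin, (∀ i ∈ J, y'' i = y i) →
          ¬ ({i | y'' i ≠ 0} ⊂ {i | Y j i ≠ 0})) ∧
      (y - ∑ j, α j • Y j) ∈ LinearMap.ker A.mulVecLin ∧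
      SignConsistent (y - ∑ j, α j • Y j) y ∧
      (∀ i ∈ J, (y - ∑ j, α j • Y j) i = 0) :=
  convex_decomposition_minimal_support_general A y hy J hyJ
end
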